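/- For real α ≥ 0, ε ≥ 0 and real β, γ, ν > 0, ∫₀¹ e^{-αx} x^{β-1}(1-x)^{γ-1} ₀F₁(;ν;εx) dx = e^{-α} (Γ(β)Γ(γ)/Γ(β+γ)) Σ_{k,l≥0} (α^k ε^l / (k! l! (ν)_l)) · ((γ)_k (β)_l / (β+γ)_{k+l}). -/

import Mathlib

/-!
Write `e^{-αx} = e^{-α} e^{α(1-x)}` and expand `e^{α(1-x)}` and `₀F₁(;ν;εx)` as power series in
`1 - x` and `x`. Against the Beta kernel `x^{β-1}(1-x)^{γ-1}` the term `(1-x)^k x^l` integrates to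
`B(β+l, γ+k) ≤ B(β, γ)`, so the double series of absolute values of the integrals converges and
the series may be integrated term by term. Finally
`B(β+l, γ+k) = B(β, γ) (β)_l (γ)_k / (β+γ)_{k+l}` by `Γ(s+n) = Γ(s) (s)_n`.
-/

open Real MeasureTheory

/-- Pochhammer (rising factorial) symbol on the reals. -/
noncomputable def poch (x : ℝ) (k : ℕ) : ℝ := (ascPochhammer ℝ k).eval x

open ProbabilityTheory Set

lemma poch_succ (x : ℝ) (n : ℕ) : poch x (n + 1) = poch x n * (x + n) :=
  ascPochhammer_succ_eval n x

lemma poch_pos {x : ℝ} (hx : 0 < x) (n : ℕ) : 0 < poch x n :=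
  ascPochhammer_pos n x hx

lemma min_one_le_poch {x : ℝ} (hx : 0 < x) (n : ℕ) : min x 1 ≤ poch x n := by
  induction n with
  | zero => simp [poch]
  | succ n ih =>
    rw [poch_succ]
    rcases n with _ | n
    · simp [poch]
    · refine ih.trans (le_mul_of_one_le_right (poch_pos hx _).le ?_)
      push_cast
      linarith [(n.cast_nonneg : (0 : ℝ) ≤ n)]

lemma Gamma_add_nat_eq_mul_poch {x : ℝ} (hx : 0 < x) (n : ℕ) :
    Gamma (x + n) = Gamma x * poch x n := by
  induction n with
  | zero => simp [poch]
  | succ n ih =>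
    rw [Nat.cast_succ, ← add_assoc, Gamma_add_one (by positivity), ih, poch_succ]
    ring

lemma beta_add_nat {p q : ℝ} (hp : 0 < p) (hq : 0 < q) (m n : ℕ) :
    beta (p + m) (q + n) = beta p q * (poch p m * poch q n / poch (p + q) (m + n)) := by
  have hpq : p + m + (q + n) = p + q + (m + n : ℕ) := by push_cast; ring
  have hΓ := (Gamma_pos_of_pos (add_pos hp hq)).ne'
  have hpoch := (poch_pos (add_pos hp hq) (m + n)).ne'
  rw [beta, beta, hpq, Gamma_add_nat_eq_mul_poch hp, Gamma_add_nat_eq_mul_poch hq,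
    Gamma_add_nat_eq_mul_poch (add_pos hp hq)]
  field_simp

lemma summable_norm_pow_div_poch_mul_factorial {ν : ℝ} (hν : 0 < ν) (z : ℝ) :
    Summable fun n : ℕ => ‖z ^ n / (poch ν n * n.factorial)‖ := by
  have hm : 0 < min ν 1 := lt_min hν one_pos
  refine .of_nonneg_of_le (fun _ => norm_nonneg _) (fun n => ?_)
    ((summable_pow_div_factorial |z|).mul_left (min ν 1)⁻¹)
  rw [norm_div, norm_pow, norm_mul, norm_of_nonneg (poch_pos hν n).le, Real.norm_natCast,
    Real.norm_eq_abs, inv_mul_eq_div, div_div, mul_comm (n.factorial : ℝ)]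
  gcongr
  exact min_one_le_poch hν n

lemma exp_mul_eq_tsum (c y : ℝ) : exp (c * y) = ∑' k : ℕ, c ^ k / k.factorial * y ^ k := by
  rw [exp_eq_exp_ℝ, NormedSpace.exp_eq_tsum_div]
  simp_rw [mul_pow, mul_div_right_comm]

section BetaIntegral

variable {p q : ℝ}

lemma cpow_mul_one_sub_cpow_eqOn :
    EqOn (fun x : ℝ => (x : ℂ) ^ ((p : ℂ) - 1) * (1 - (x : ℂ)) ^ ((q : ℂ) - 1))
      (fun x : ℝ => ((x ^ (p - 1) * (1 - x) ^ (q - 1) : ℝ) : ℂ)) (uIcc 0 1) := by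
  intro x hx
  rw [uIcc_of_le zero_le_one] at hx
  simp only [Complex.ofReal_mul, Complex.ofReal_cpow hx.1,
    Complex.ofReal_cpow (sub_nonneg.2 hx.2)]
  push_cast
  ring

lemma integrableOn_rpow_mul_one_sub_rpow (hp : 0 < p) (hq : 0 < q) :
    IntegrableOn (fun x : ℝ => x ^ (p - 1) * (1 - x) ^ (q - 1)) (Ioo 0 1) := by
  have h := Complex.betaIntegral_convergent (u := p) (v := q) (by simpa) (by simpa)
  rw [intervalIntegrable_iff_integrableOn_Ioo_of_le zero_le_one] at h
  refine IntegrableOn.congr_fun h.norm (fun x hx => ?_) measurableSet_Ioo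
  have hx' : x ∈ uIcc 0 1 := by rw [uIcc_of_le zero_le_one]; exact Ioo_subset_Icc_self hx
  have hx1 : 0 < 1 - x := sub_pos.2 hx.2
  have h_eq := cpow_mul_one_sub_cpow_eqOn (p := p) (q := q) hx'
  dsimp only at h_eq
  rw [h_eq, Complex.norm_real, norm_of_nonneg (by have := hx.1; positivity)]

lemma integral_rpow_mul_one_sub_rpow (hp : 0 < p) (hq : 0 < q) :
    ∫ x in Ioo (0 : ℝ) 1, x ^ (p - 1) * (1 - x) ^ (q - 1) = beta p q := by
  rw [beta_eq_betaIntegralReal p q hp hq, Complex.betaIntegral,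
    intervalIntegral.integral_congr cpow_mul_one_sub_cpow_eqOn, intervalIntegral.integral_ofReal,
    Complex.ofReal_re, intervalIntegral.integral_of_le zero_le_one, integral_Ioc_eq_integral_Ioo]

lemma beta_add_nat_le (hp : 0 < p) (hq : 0 < q) (m n : ℕ) : beta (p + m) (q + n) ≤ beta p q := by
  rw [← integral_rpow_mul_one_sub_rpow hp hq,
    ← integral_rpow_mul_one_sub_rpow (by positivity) (by positivity)]
  refine setIntegral_mono_on (integrableOn_rpow_mul_one_sub_rpow (by positivity) (by positivity))
    (integrableOn_rpow_mul_one_sub_rpow hp hq) measurableSet_Ioo fun x ⟨hx0, hx1⟩ => ?_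
  have h1x : 0 < 1 - x := sub_pos.2 hx1
  exact mul_le_mul (rpow_le_rpow_of_exponent_ge hx0 hx1.le (by linarith))
    (rpow_le_rpow_of_exponent_ge h1x (by linarith) (by linarith)) (by positivity) (by positivity)

end BetaIntegral

lemma summable_norm_mul_pow {a : ℕ → ℝ} (ha : Summable fun k => ‖a k‖) {y : ℝ} (hy0 : 0 ≤ y)
    (hy1 : y ≤ 1) : Summable fun k => ‖a k * y ^ k‖ := by
  refine .of_nonneg_of_le (fun _ => norm_nonneg _) (fun k => ?_) ha
  rw [norm_mul, norm_pow, norm_of_nonneg hy0]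
  exact mul_le_of_le_one_right (norm_nonneg _) (pow_le_one₀ hy0 hy1)

lemma rpow_mul_one_sub_rpow_mul_tsum_mul_tsum {p q x : ℝ} (hx : x ∈ Ioo 0 1) {a b : ℕ → ℝ}
    (ha : Summable fun k => ‖a k‖) (hb : Summable fun l => ‖b l‖) :
    x ^ (p - 1) * (1 - x) ^ (q - 1) * ((∑' k, a k * (1 - x) ^ k) * ∑' l, b l * x ^ l) =
      ∑' kl : ℕ × ℕ, a kl.1 * b kl.2 * (x ^ (p + kl.2 - 1) * (1 - x) ^ (q + kl.1 - 1)) := by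
  obtain ⟨hx0, hx1⟩ := hx
  have h1x : 0 < 1 - x := sub_pos.2 hx1
  rw [tsum_mul_tsum_of_summable_norm (summable_norm_mul_pow ha h1x.le (by linarith))
    (summable_norm_mul_pow hb hx0.le hx1.le), ← tsum_mul_left]
  refine tsum_congr fun (k, l) => ?_
  rw [add_sub_right_comm p, add_sub_right_comm q, rpow_add hx0, rpow_add h1x,
    rpow_natCast, rpow_natCast]
  ring

lemma integral_rpow_mul_one_sub_rpow_mul_tsum_mul_tsum {p q : ℝ} (hp : 0 < p) (hq : 0 < q)
    {a b : ℕ → ℝ} (ha : Summable fun k => ‖a k‖) (hb : Summable fun l => ‖b l‖) :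
    ∫ x in Ioo (0 : ℝ) 1, x ^ (p - 1) * (1 - x) ^ (q - 1) *
        ((∑' k, a k * (1 - x) ^ k) * ∑' l, b l * x ^ l) =
      ∑' kl : ℕ × ℕ, a kl.1 * b kl.2 * beta (p + kl.2) (q + kl.1) := by
  set F : ℕ × ℕ → ℝ → ℝ := fun kl x =>
    a kl.1 * b kl.2 * (x ^ (p + kl.2 - 1) * (1 - x) ^ (q + kl.1 - 1)) with hF
  have h_int (kl : ℕ × ℕ) : IntegrableOn (F kl) (Ioo 0 1) :=
    (integrableOn_rpow_mul_one_sub_rpow (by positivity) (by positivity)).const_mul _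
  have h_integral (kl : ℕ × ℕ) : ∫ x in Ioo (0 : ℝ) 1, F kl x =
      a kl.1 * b kl.2 * beta (p + kl.2) (q + kl.1) := by
    rw [hF, integral_const_mul, integral_rpow_mul_one_sub_rpow (by positivity) (by positivity)]
  have h_integral_norm (kl : ℕ × ℕ) : ∫ x in Ioo (0 : ℝ) 1, ‖F kl x‖ =
      ‖a kl.1‖ * ‖b kl.2‖ * beta (p + kl.2) (q + kl.1) := by
    rw [← integral_rpow_mul_one_sub_rpow (by positivity) (by positivity), ← integral_const_mul]
    refine setIntegral_congr_fun measurableSet_Ioo fun x ⟨hx0, hx1⟩ => ?_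
    have h1x : 0 < 1 - x := sub_pos.2 hx1
    simp only [hF, norm_mul]
    rw [norm_of_nonneg (rpow_nonneg hx0.le _), norm_of_nonneg (rpow_nonneg h1x.le _)]
  have h_summable : Summable fun kl : ℕ × ℕ => ∫ x in Ioo (0 : ℝ) 1, ‖F kl x‖ := by
    simp_rw [h_integral_norm]
    refine .of_nonneg_of_le (fun kl => ?_) (fun kl => ?_) ((ha.mul_norm hb).mul_right (beta p q))
    · exact mul_nonneg (by positivity) (beta_pos (by positivity) (by positivity)).le
    · rw [norm_mul]
      gcongr
      exact beta_add_nat_le hp hq _ _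
  rw [setIntegral_congr_fun measurableSet_Ioo
      fun x hx => rpow_mul_one_sub_rpow_mul_tsum_mul_tsum hx ha hb,
    ← integral_tsum_of_summable_integral_norm h_int h_summable]
  exact tsum_congr h_integral

theorem r_function_general_general (α ε β γ ν : ℝ)
    (hβ : 0 < β) (hγ : 0 < γ) (hν : 0 < ν) :
    ∫ x in Set.Ioo (0:ℝ) 1,
        Real.exp (-α * x) * x ^ (β - 1) * (1 - x) ^ (γ - 1) *
          (∑' l : ℕ, (ε * x) ^ l / (poch ν l * l.factorial)) =
      Real.exp (-α) * (Real.Gamma β * Real.Gamma γ / Real.Gamma (β + γ)) *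
        ∑' kl : ℕ × ℕ,
          (α ^ kl.1 * ε ^ kl.2 / (kl.1.factorial * kl.2.factorial * poch ν kl.2)) *
            (poch γ kl.1 * poch β kl.2 / poch (β + γ) (kl.1 + kl.2)) := by
  have h_integrand : ∀ x ∈ Ioo (0 : ℝ) 1,
      exp (-α * x) * x ^ (β - 1) * (1 - x) ^ (γ - 1) *
          (∑' l : ℕ, (ε * x) ^ l / (poch ν l * l.factorial)) =
        exp (-α) * (x ^ (β - 1) * (1 - x) ^ (γ - 1) *
          ((∑' k : ℕ, α ^ k / k.factorial * (1 - x) ^ k) *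
            ∑' l : ℕ, ε ^ l / (poch ν l * l.factorial) * x ^ l)) := fun x _ => by
    simp_rw [← exp_mul_eq_tsum, mul_pow, mul_div_right_comm (ε ^ _)]
    rw [show -α * x = -α + α * (1 - x) by ring, exp_add]
    ring
  have h_exp : Summable fun k : ℕ => ‖α ^ k / k.factorial‖ :=
    summable_abs_iff.2 (summable_pow_div_factorial α)
  rw [setIntegral_congr_fun measurableSet_Ioo h_integrand, integral_const_mul,
    integral_rpow_mul_one_sub_rpow_mul_tsum_mul_tsum hβ hγ h_exp
      (summable_norm_pow_div_poch_mul_factorial hν ε),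
    mul_assoc, ← tsum_mul_left (a := Gamma β * Gamma γ / Gamma (β + γ))]
  congr 1
  refine tsum_congr fun (k, l) => ?_
  have hpochν := (poch_pos hν l).ne'
  have hpochβγ := (poch_pos (add_pos hβ hγ) (k + l)).ne'
  rw [beta_add_nat hβ hγ, beta, add_comm l k]
  field_simp

theorem r_function_general (α ε β γ ν : ℝ) (hα : 0 ≤ α) (hε : 0 ≤ ε)
    (hβ : 0 < β) (hγ : 0 < γ) (hν : 0 < ν) :
    ∫ x in Set.Ioo (0:ℝ) 1,
        Real.exp (-α * x) * x ^ (β - 1) * (1 - x) ^ (γ - 1) *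
          (∑' l : ℕ, (ε * x) ^ l / (poch ν l * l.factorial)) =
      Real.exp (-α) * (Real.Gamma β * Real.Gamma γ / Real.Gamma (β + γ)) *
        ∑' kl : ℕ × ℕ,
          (α ^ kl.1 * ε ^ kl.2 / (kl.1.factorial * kl.2.factorial * poch ν kl.2)) *
            (poch γ kl.1 * poch β kl.2 / poch (β + γ) (kl.1 + kl.2)) :=
  r_function_general_general α ε β γ ν hβ hγ hν
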